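/- arXiv:2002.10712 — 2 statements merged into one kernel-verified Lean document; each statement's English description precedes it below -/
import Mathlib

section
/- Σ⁰₂-double negation elimination for the reals is Weihrauch equivalent to the discrete limit operator: Σ⁰₂-DNE_ℝ ≡_W Lim_ℕ. -/
open scoped Classical

noncomputable section

/-- Baire space. -/
abbrev Baire : Type := ℕ → ℕ

/-- A partial multifunction with explicit domain. -/
structure MultiFn (α : Type*) where
  Dom : Set α
  val : α → Set α

/-- The length-`k` prefix of `x` as a list. -/
def prefixList (x : Baire) (k : ℕ) : List ℕ := List.ofFn fun i : Fin k => x i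

/-- The raw behaviour of the (code of a) partial continuous function `t` on the
finite input `l` at position `n`. -/
def raw (t : Baire) (l : List ℕ) (n : ℕ) : Option ℕ :=
  match t (Nat.pair (Encodable.encode l) n) with
  | 0 => none
  | Nat.succ v => some v

/-- `evalB t x y` : the partial (continuous) function coded by `t` is defined at `x`
with value `y`; each value `y n` is read off at the minimal prefix of `x` on which
the code converges. Every such function is continuous, and every partial continuous
function on Baire space arises this way. -/
def evalB (t x y : Baire) : Prop :=
  ∀ n, ∃ k, raw t (prefixList x k) n = some (y n) ∧
    ∀ j < k, raw t (prefixList x j) n = none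

/-- Pairing on Baire space. -/
def pairB (x y : Baire) : Baire := fun n => Nat.pair (x n) (y n)

def fstB (z : Baire) : Baire := fun n => (Nat.unpair (z n)).1

def sndB (z : Baire) : Baire := fun n => (Nat.unpair (z n)).2

/-- Weihrauch reduction of `f` to `g` witnessed by an inner reduction (code) `h`
and an outer reduction (code) `k`. -/
def WRedBy (f g : MultiFn Baire) (h k : Baire) : Prop :=
  ∀ x ∈ f.Dom, ∃ hx, evalB h x hx ∧ hx ∈ g.Dom ∧
    ∀ y ∈ g.val hx, ∃ z, evalB k (pairB x y) z ∧ z ∈ f.val x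

/-- Weihrauch reducibility (computable reductions). -/
def WRed (f g : MultiFn Baire) : Prop :=
  ∃ h k : Baire, Computable h ∧ Computable k ∧ WRedBy f g h k

/-- Continuous Weihrauch reducibility. -/
def WRedC (f g : MultiFn Baire) : Prop := ∃ h k : Baire, WRedBy f g h k

/-- Weihrauch equivalence. -/
def WEquiv (f g : MultiFn Baire) : Prop := WRed f g ∧ WRed g f

/-! ## Reduction games -/

/-- Merge a finite list of Baire points into a single Baire point. -/
def mergeList (l : List Baire) : Baire := fun n =>
  if n = 0 then l.length
  else l.getD (Nat.unpair (n - 1)).1 (fun _ => 0) (Nat.unpair (n - 1)).2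

/-- Encode a move of Player II (a flag together with a Baire point) as a Baire point;
the flag `true` means "declare victory", `false` means "query". -/
def encodeMove (m : Bool × Baire) : Baire := fun n =>
  if n = 0 then (if m.1 then 1 else 0) else m.2 (n - 1)

/-- `τ` is a (total continuous) strategy for Player II coded by the Baire point `t`. -/
def StrategyCoded (t : Baire) (τ : List Baire → Bool × Baire) : Prop :=
  ∀ l : List Baire, evalB t (mergeList l) (encodeMove (τ l))

/-- The history of the play where Player I uses `σ` and Player II uses `τ`:
after round `n`, the lists of the moves of I and of II so far. Player I's
first move is `σ []`. -/
def hist (σ : List (Bool × Baire) → Baire) (τ : List Baire → Bool × Baire) :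
    ℕ → List Baire × List (Bool × Baire)
  | 0 => ([σ []], [τ [σ []]])
  | n + 1 =>
    let h := hist σ τ n
    let x := σ h.2
    (h.1 ++ [x], h.2 ++ [τ (h.1 ++ [x])])

/-- Player I's move at round `n`. -/
def xmove (σ : List (Bool × Baire) → Baire) (τ : List Baire → Bool × Baire)
    (n : ℕ) : Baire :=
  (hist σ τ n).1.getD n (fun _ => 0)

/-- Player II's move at round `n`. -/
def ymove (σ : List (Bool × Baire) → Baire) (τ : List Baire → Bool × Baire)
    (n : ℕ) : Bool × Baire :=
  (hist σ τ n).2.getD n (true, fun _ => 0)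

/-- Player I violates the rules of the game `G(f,g)` at round `m`. -/
def IViol (f g : MultiFn Baire) (σ : List (Bool × Baire) → Baire)
    (τ : List Baire → Bool × Baire) (m : ℕ) : Prop :=
  (m = 0 ∧ xmove σ τ 0 ∉ f.Dom) ∨
  (∃ m', m = m' + 1 ∧ (ymove σ τ m').1 = false ∧
    xmove σ τ m ∉ g.val (ymove σ τ m').2)

/-- Player II violates the rules of the game `G(f,g)` at round `m`
(II queried something outside the domain of `g`). -/
def IIViol (g : MultiFn Baire) (σ : List (Bool × Baire) → Baire)
    (τ : List Baire → Bool × Baire) (m : ℕ) : Prop :=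
  (ymove σ τ m).1 = false ∧ (ymove σ τ m).2 ∉ g.Dom

/-- Player II wins the play of `G(f,g)` determined by `σ` and `τ` :
either I violates the rules before II does, or II obeys the rules and
declares victory with an element of `f(x₀)`. -/
def IIWinsPlay (f g : MultiFn Baire) (σ : List (Bool × Baire) → Baire)
    (τ : List Baire → Bool × Baire) : Prop :=
  (∃ m, IViol f g σ τ m ∧ ∀ k < m, ¬ IIViol g σ τ k) ∨
  (∃ m, (∀ k < m, (ymove σ τ k).1 = false) ∧ (ymove σ τ m).1 = true ∧
    (∀ k ≤ m, ¬ IIViol g σ τ k) ∧ (ymove σ τ m).2 ∈ f.val (xmove σ τ 0))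

/-- Generalized Weihrauch reducibility: Player II has a computable winning
strategy in the reduction game `G(f,g)`. -/
def GWRed (f g : MultiFn Baire) : Prop :=
  ∃ (t : Baire) (τ : List Baire → Bool × Baire),
    Computable t ∧ StrategyCoded t τ ∧ ∀ σ, IIWinsPlay f g σ τ

/-- Continuous generalized Weihrauch reducibility: Player II has a continuous
winning strategy in the reduction game `G(f,g)`. -/
def GWRedC (f g : MultiFn Baire) : Prop :=
  ∃ (t : Baire) (τ : List Baire → Bool × Baire),
    StrategyCoded t τ ∧ ∀ σ, IIWinsPlay f g σ τ

/-- The multifunction `g^Game` arising from the reduction game for `g`: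
an input encodes a pair `(x₀, t)` where `t` codes a strategy `τ` for Player II
which declares victory against every play of Player I with first move `x₀`;
outputs are the values with which II declares victory along some such play. -/
def gameOf (g : MultiFn Baire) : MultiFn Baire where
  Dom := {z | ∃ τ, StrategyCoded (sndB z) τ ∧
    ∀ σ, σ [] = fstB z → ∃ m, (ymove σ τ m).1 = true}
  val := fun z => {u | ∃ τ, StrategyCoded (sndB z) τ ∧
    ∃ σ, σ [] = fstB z ∧ ∃ m, (ymove σ τ m).1 = true ∧ (ymove σ τ m).2 = u}

/-! ## Compositional products, parallelizations, coproducts -/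

/-- Composition of partial multifunctions. -/
def mcomp (h g : MultiFn Baire) : MultiFn Baire where
  Dom := {x | x ∈ g.Dom ∧ g.val x ⊆ h.Dom}
  val := fun x => ⋃ y ∈ g.val x, h.val y

/-- `s` is a compositional product `h ⋆ g` : a Weihrauch-minimal element of the
set of compositions `h₀ ∘ g₀` with `g₀ ≤_W g` and `h₀ ≤_W h`. -/
def IsCompProd (h g s : MultiFn Baire) : Prop :=
  (∃ g₀ h₀, WRed g₀ g ∧ WRed h₀ h ∧ WEquiv s (mcomp h₀ g₀)) ∧
  (∀ g₀ h₀, WRed g₀ g → WRed h₀ h → WRed s (mcomp h₀ g₀))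

def tupLen (z : Baire) : ℕ := z 0

def tupProj (z : Baire) (i : ℕ) : Baire := fun m => z (Nat.pair i m + 1)

/-- Finite parallelization `f*`. -/
def finPar (f : MultiFn Baire) : MultiFn Baire where
  Dom := {z | ∀ i < tupLen z, tupProj z i ∈ f.Dom}
  val := fun z => {w | tupLen w = tupLen z ∧
    ∀ i < tupLen z, tupProj w i ∈ f.val (tupProj z i)}

/-- Product of two multifunctions. -/
def prodMF (f g : MultiFn Baire) : MultiFn Baire where
  Dom := {z | fstB z ∈ f.Dom ∧ sndB z ∈ g.Dom}
  val := fun z => {w | fstB w ∈ f.val (fstB z) ∧ sndB w ∈ g.val (sndB z)}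

def tailB (z : Baire) : Baire := fun n => z (n + 1)

/-- Coproduct (disjoint union) of a sequence of multifunctions. -/
def coprod (s : ℕ → MultiFn Baire) : MultiFn Baire where
  Dom := {z | tailB z ∈ (s (z 0)).Dom}
  val := fun z => (s (z 0)).val (tailB z)

/-- The identity multifunction (the Weihrauch degree `1`). -/
def idMF : MultiFn Baire := ⟨Set.univ, fun x => {x}⟩

/-! ## Trees -/

def IsTree (T : Set (List Bool)) : Prop := ∀ σ ∈ T, ∀ τ, τ <+: σ → τ ∈ T

def InfTree (T : Set (List Bool)) : Prop := ∀ ℓ, ∃ σ ∈ T, σ.length = ℓ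

def IsPathOf (T : Set (List Bool)) (p : ℕ → Bool) : Prop :=
  ∀ n, (List.ofFn fun i : Fin n => p i) ∈ T

/-- An all-or-unique tree: at each level, either all strings or exactly one. -/
def AouTree (T : Set (List Bool)) : Prop :=
  IsTree T ∧ ∀ ℓ, ({σ | σ ∈ T ∧ σ.length = ℓ} = {σ : List Bool | σ.length = ℓ} ∨
    ∃ σ₀, {σ | σ ∈ T ∧ σ.length = ℓ} = {σ₀})

/-- A 2-tree: exactly two nodes at each (positive) level. -/
def TwoTree (T : Set (List Bool)) : Prop :=
  IsTree T ∧ ∀ ℓ > 0, ∃ a b : List Bool, a ≠ b ∧ {σ | σ ∈ T ∧ σ.length = ℓ} = {a, b}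

def BranchNodes (T : Set (List Bool)) : Set (List Bool) :=
  {σ | σ ++ [false] ∈ T ∧ σ ++ [true] ∈ T}

/-- A rational 2-tree: a 2-tree with only finitely many branching nodes. -/
def RatTwoTree (T : Set (List Bool)) : Prop := TwoTree T ∧ (BranchNodes T).Finite

/-- A basic clopen tree: the set of strings comparable with a fixed string. -/
def BasicClopenTree (T : Set (List Bool)) : Prop :=
  ∃ σ : List Bool, T = {τ | τ <+: σ ∨ σ <+: τ}

/-- A Baire point codes a tree by its characteristic function. -/
def treeOf (x : Baire) : Set (List Bool) := {σ | x (Encodable.encode σ) = 1}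

/-- A Baire point codes an infinite binary sequence. -/
def pathOf (y : Baire) : ℕ → Bool := fun n => y n != 0

/-- Weak König's lemma restricted to the class `C` of trees, as a multifunction. -/
def WKLof (C : Set (List Bool) → Prop) : MultiFn Baire where
  Dom := {x | C (treeOf x) ∧ InfTree (treeOf x)}
  val := fun x => {y | IsPathOf (treeOf x) (pathOf y)}

def WKL : MultiFn Baire := WKLof IsTree
def WKLle2 : MultiFn Baire := WKLof TwoTree
def WKLeq2 : MultiFn Baire := WKLof RatTwoTree
def WKLaou : MultiFn Baire := WKLof AouTree
def WKLclop : MultiFn Baire := WKLof BasicClopenTree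

/-! ## Arithmetical principles as multifunctions -/

/-- The discrete limit operator on ℕ. -/
def LimN : MultiFn Baire where
  Dom := {x | ∃ v N, ∀ n ≥ N, x n = v}
  val := fun x => {u | ∃ v, (∀ m, u m = v) ∧ ∃ N, ∀ n ≥ N, x n = v}

/-- `Σ⁰₂` double negation elimination, as a multifunction: the input codes a
decidable relation `R(n,m) ≡ α(⟨n,m⟩) = 0` with `¬¬∃n∀m R(n,m)`; outputs code
some `n` with `∀m R(n,m)`. -/
def DNE2 : MultiFn Baire where
  Dom := {α | ¬¬ ∃ n, ∀ m, α (Nat.pair n m) = 0}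
  val := fun α => {u | ∃ n, (∀ m, u m = n) ∧ ∀ m, α (Nat.pair n m) = 0}

/-- Ramsey's theorem for singletons and two colours. -/
def RT12 : MultiFn Baire where
  Dom := {c | ∀ n, c n ≤ 1}
  val := fun c => {h | (∀ n, h n ≤ 1) ∧ {n | h n = 1}.Infinite ∧
    ∃ i, ∀ n, h n = 1 → c n = i}

/-- The `i`-th `Σ⁰₂` statement coded by `α`. -/
def Sig2 (α : Baire) (i : ℕ) : Prop := ∃ a, ∀ b, α (Nat.pair i (Nat.pair a b)) = 0

/-- `Σ⁰₂` de Morgan's law, as a multifunction. -/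
def DML2 : MultiFn Baire where
  Dom := {α | ¬ (Sig2 α 0 ∧ Sig2 α 1)}
  val := fun α => {u | ∃ j ≤ 1, (∀ m, u m = j) ∧ ¬ Sig2 α j}

/-- The limited principle of omniscience. -/
def LPO : MultiFn Baire where
  Dom := Set.univ
  val := fun p => {u | ((∀ n, u n = 0) ∧ ∀ n, p n = 0) ∨
    ((∀ n, u n = 1) ∧ ∃ n, p n ≠ 0)}

/-- A semicontinuous bound for a (finite-valued) multifunction `f`: a partial
continuous `g` (coded by `t`) and a lower semicontinuous `b` such that
`f(x) ⊆ {g(x,n) : n < b(x)}`. -/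
def SemicontBound (f : MultiFn Baire) : Prop :=
  ∃ (t : Baire) (b : Baire → ℕ), LowerSemicontinuousOn b f.Dom ∧
    ∀ x ∈ f.Dom, f.val x ⊆ {y | ∃ n < b x, evalB t (pairB x (fun _ => n)) y}

/-! ## Relative partial combinatory algebras and jump operators -/

def app2 {α : Type*} (m : α → α → Option α) (a b c : α) : Option α :=
  (m a b).bind fun ab => m ab c

/-- `(P, α, m)` is a relative partial combinatory algebra: there are combinators
`k, s ∈ P` (shared by the lightface part `P` and the boldface part `α`), `P` is
closed under the application, and `k`, `s` satisfy the usual specifications. -/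
def IsRelPCA {α : Type*} (m : α → α → Option α) (P : Set α) : Prop :=
  ∃ k ∈ P, ∃ s ∈ P,
    (∀ a ∈ P, ∀ b ∈ P, ∀ c, m a b = some c → c ∈ P) ∧
    (∀ a b : α, app2 m k a b = some a) ∧
    (∀ a b : α, ∃ c, app2 m s a b = some c) ∧
    (∀ a b c : α, (app2 m s a b).bind (fun x => m x c) =
      (m a c).bind fun ac => (m b c).bind fun bc => m ac bc)

/-- Composition of set-valued maps (empty value = undefined). -/
def mcompSet {α : Type*} (j₁ j₂ : α → Set α) (x : α) : Set α :=
  {z | (∀ y ∈ j₂ x, (j₁ y).Nonempty) ∧ ∃ y ∈ j₂ x, z ∈ j₁ y}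

/-- `j` is an idempotent jump operator on the relative pca `(P, α, m)`. -/
def IdempotentJump {α : Type*} (m : α → α → Option α) (P : Set α)
    (j : α → Set α) : Prop :=
  (∃ u ∈ P, ∀ a x : α, ∃ w, app2 m u a x = some w ∧
    j w = {z | ∃ y ∈ j x, m a y = some z}) ∧
  (∃ ι ∈ P, ∀ x : α, ∃ w, m ι x = some w ∧ j w = {x}) ∧
  (∃ jj ∈ P, ∀ x : α, ∃ w, m jj x = some w ∧ j w = mcompSet j j x)

/-- `P_j = {a' : a ∈ P, j(a) = {a'}}`. -/
def Pjump {α : Type*} (P : Set α) (j : α → Set α) : Set α :=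
  {a' | ∃ a ∈ P, j a = {a'}}

/-- The new application `a ∗_j b = a' ∗ b` where `j(a) = {a'}`. -/
def appJ {α : Type*} (m : α → α → Option α) (j : α → Set α) (a b : α) : Option α :=
  if h : ∃ a', j a = {a'} then m h.choose b else none

/-- `f` is `(Q, j)`-realizable: some `a ∈ Q` satisfies `j(a x) ⊆ f(x)` for all
`x ∈ dom f`. -/
def JRealizable {α : Type*} (m : α → α → Option α) (Q : Set α) (j : α → Set α)
    (f : MultiFn α) : Prop :=
  ∃ a ∈ Q, ∀ x ∈ f.Dom, ∃ w, m a x = some w ∧ (j w).Nonempty ∧ j w ⊆ f.val x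

/-- The Kleene second algebra application. -/
def k2app (p x : Baire) : Option Baire :=
  if h : ∃ y, evalB p x y then some h.choose else none

/-- The lightface part of the Kleene–Vesley algebra: the computable points. -/
def KVP : Set Baire := {p | Computable p}

/-! ## Real-number principles -/

/-- A regular Cauchy sequence of rationals: `|q n - q m| < 2⁻ⁿ` for `m ≥ n`. -/
def RegCauchy (q : ℕ → ℚ) : Prop := ∀ n m, n ≤ m → |q n - q m| < ((2 : ℚ) ^ n)⁻¹

/-- `x` is the limit of the rational sequence `q`. -/
def limOf (q : ℕ → ℚ) (x : ℝ) : Prop :=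
  Filter.Tendsto (fun n => (q n : ℝ)) Filter.atTop (nhds x)

/-- The real with binary expansion `f`. -/
def binExp (f : ℕ → Bool) : ℝ := ∑' n, if f n then ((2 : ℝ)⁻¹) ^ (n + 1) else 0

/-- `x` is not irrational (stated negatively, as in `BE_ℚ`). -/
def NotIrrational (x : ℝ) : Prop := ¬ ∀ a b : ℤ, a ≠ 0 → (a : ℝ) * x ≠ (b : ℝ)

/-- The binary expansion principle for regular Cauchy rationals. -/
def BEQProp : Prop :=
  ∀ (q : ℕ → ℚ) (x : ℝ), RegCauchy q → limOf q x → x ∈ Set.Icc (0 : ℝ) 1 →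
    NotIrrational x → ∃ f : ℕ → Bool, x = binExp f

/-- Decode a Baire point as a sequence of rationals. -/
def qOf (z : Baire) (n : ℕ) : ℚ := ((Encodable.decode (z n) : Option ℚ)).getD 0

/-- `BE_ℚ` as a multifunction. -/
def BEQmf : MultiFn Baire where
  Dom := {z | RegCauchy (qOf z) ∧
    ∃ x, limOf (qOf z) x ∧ x ∈ Set.Icc (0 : ℝ) 1 ∧ NotIrrational x}
  val := fun z => {y | ∀ x, limOf (qOf z) x → x = binExp (pathOf y)}

/-- `f` is the rational piecewise linear map through the points listed in `l`. -/
def Interp (l : List (ℚ × ℚ)) (f : ℝ → ℝ) : Prop :=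
  (l.map Prod.fst).Pairwise (· < ·) ∧
  (∀ p ∈ l, f (p.1 : ℝ) = (p.2 : ℝ)) ∧
  ∀ i, i + 1 < l.length → ∀ t ∈ Set.Icc (0 : ℝ) 1,
    f ((1 - t) * ((l.getD i (0, 0)).1 : ℝ) + t * ((l.getD (i + 1) (0, 0)).1 : ℝ)) =
      (1 - t) * ((l.getD i (0, 0)).2 : ℝ) + t * ((l.getD (i + 1) (0, 0)).2 : ℝ)

/-- Every point of `l` lies in the `2^{-s-1}`-neighbourhood of the graph of `f`. -/
def ApproxStep (l : List (ℚ × ℚ)) (f : ℝ → ℝ) (s : ℕ) : Prop :=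
  ∀ p ∈ l, ∃ x : ℝ, |(p.1 : ℝ) - x| < (2 : ℝ)⁻¹ ^ (s + 1) ∧
    |(p.2 : ℝ) - f x| < (2 : ℝ)⁻¹ ^ (s + 1)

/-- The intermediate value theorem for rational piecewise linear maps given as
discrete limits. -/
def IVTlinProp : Prop :=
  ∀ (c : ℕ → List (ℚ × ℚ)) (f : ℕ → ℝ → ℝ),
    (∀ s, Interp (c s) (f s)) →
    (∀ s, ApproxStep (c (s + 1)) (f s) s) →
    (¬ ∀ s, ∃ t > s, c t ≠ c s) →
    ∀ s₀, (∀ s ≥ s₀, c s = c s₀) →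
      f s₀ 0 < 0 → 0 < f s₀ 1 → ∃ x ∈ Set.Icc (0 : ℝ) 1, f s₀ x = 0

/-- Decode a Baire point as a sequence of finite lists of rational points. -/
def cOf (z : Baire) (n : ℕ) : List (ℚ × ℚ) :=
  ((Encodable.decode (z n) : Option (List (ℚ × ℚ)))).getD []

/-- `IVT_lin` as a multifunction: the input codes a discrete-limit approximation
of a rational piecewise linear map with a sign change, and outputs are regular
Cauchy names of zeros. -/
def IVTlinMF : MultiFn Baire where
  Dom := {z | (∀ s, ∃ fs : ℝ → ℝ, Interp (cOf z s) fs) ∧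
    (∀ s, ∀ fs : ℝ → ℝ, Interp (cOf z s) fs → ApproxStep (cOf z (s + 1)) fs s) ∧
    (¬ ∀ s, ∃ t > s, cOf z t ≠ cOf z s) ∧
    (∀ s₀, (∀ s ≥ s₀, cOf z s = cOf z s₀) → ∀ g : ℝ → ℝ, Interp (cOf z s₀) g →
      g 0 < 0 ∧ 0 < g 1)}
  val := fun z => {y | RegCauchy (qOf y) ∧
    ∀ s₀, (∀ s ≥ s₀, cOf z s = cOf z s₀) → ∀ g : ℝ → ℝ, Interp (cOf z s₀) g →
      ∃ x, limOf (qOf y) x ∧ x ∈ Set.Icc (0 : ℝ) 1 ∧ g x = 0}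


/-! Σ⁰₂-DNE reduces to Lim_ℕ by guessing, at stage `n`, the least `n' ≤ n` whose Π⁰₁ statement
`∀ m, R(n', m)` has no counterexample `m ≤ n`: the guesses stabilise on the least true witness.
Conversely, an eventually constant `x` is sent to the relation "`x` is constant on `[n, n + m]`";
any witness `n` is a point from which `x` is constant, so `x n` is the limit. -/

def listFn (l : List ℕ) (i : ℕ) : ℕ := l.getD i 0

lemma primrec₂_listFn : Primrec₂ listFn := Primrec.list_getD 0

lemma prefixList_length (x : Baire) (k : ℕ) : (prefixList x k).length = k := by
  simp [prefixList]

lemma listFn_prefixList (x : Baire) {k i : ℕ} (h : i < k) : listFn (prefixList x k) i = x i := by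
  simp [listFn, prefixList, List.getD_eq_getElem?_getD, h]

/-- At output position `n` the code answers `out l n` only on prefixes `l` of length `use l n`;
this pins down the prefix at which `evalB` reads the value, which must be the shortest one on
which the code converges. -/
def gatedCode (use out : List ℕ → ℕ → ℕ) : Baire := fun q =>
  (Encodable.decode (α := List ℕ) q.unpair.1).elim 0 fun l =>
    if l.length = use l q.unpair.2 then out l q.unpair.2 + 1 else 0

lemma raw_gatedCode (use out : List ℕ → ℕ → ℕ) (l : List ℕ) (n : ℕ) :
    raw (gatedCode use out) l n = if l.length = use l n then some (out l n) else none := by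
  simp only [raw, gatedCode, Nat.unpair_pair, Encodable.encodek, Option.elim_some]
  split_ifs <;> rfl

lemma computable_gatedCode {use out : List ℕ → ℕ → ℕ} (huse : Primrec₂ use)
    (hout : Primrec₂ out) : Computable (gatedCode use out) := by
  have hn : Primrec fun p : ℕ × List ℕ => p.1.unpair.2 :=
    (Primrec.snd.comp Primrec.unpair).comp Primrec.fst
  have hgate := Primrec.ite (Primrec.eq.comp (Primrec.list_length.comp Primrec.snd)
    (huse.comp Primrec.snd hn)) (Primrec.succ.comp (hout.comp Primrec.snd hn)) (Primrec.const 0)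
  refine Primrec.to_comp ((Primrec.option_casesOn
    (Primrec.decode.comp (Primrec.fst.comp Primrec.unpair)) (Primrec.const 0) hgate.to₂).of_eq
    fun q => ?_)
  unfold gatedCode
  cases Encodable.decode (α := List ℕ) q.unpair.1 <;> rfl

lemma evalB_gatedCode {use out : List ℕ → ℕ → ℕ} {x y : Baire} (U : ℕ → ℕ)
    (hU : ∀ n k, k = use (prefixList x k) n ↔ k = U n)
    (hout : ∀ n, out (prefixList x (U n)) n = y n) :
    evalB (gatedCode use out) x y := by
  intro n
  refine ⟨U n, ?_, fun j hj => ?_⟩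
  · rw [raw_gatedCode, prefixList_length, if_pos ((hU n _).2 rfl), hout]
  · rw [raw_gatedCode, prefixList_length, if_neg fun h => hj.ne ((hU n j).1 h)]

lemma evalB_gatedCode_of_use {F : (ℕ → ℕ) → ℕ → ℕ} (U : ℕ → ℕ)
    (hF : ∀ β β' n, (∀ i < U n, β i = β' i) → F β n = F β' n) (x : Baire) :
    evalB (gatedCode (fun _ n => U n) fun l n => F (listFn l) n) x (F x) :=
  evalB_gatedCode U (fun _ _ => Iff.rfl) fun n =>
    hF _ _ n fun _ hi => listFn_prefixList x hi

/-- The least `n' ≤ n` whose `Π⁰₁` statement `∀ m, α ⟨n', m⟩ = 0` has not been refuted by stage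
`n` (or `n + 1` if there is none). -/
def leastSurvivor (α : ℕ → ℕ) (n : ℕ) : ℕ :=
  (List.range (n + 1)).findIdx fun n' => decide (∀ m ≤ n, α (Nat.pair n' m) = 0)

lemma leastSurvivor_congr {α β : ℕ → ℕ} {n : ℕ} (h : ∀ i < (n + 1) ^ 2, α i = β i) :
    leastSurvivor α n = leastSurvivor β n := by
  have hread : ∀ n' ∈ List.range (n + 1), ∀ m ≤ n, α (Nat.pair n' m) = β (Nat.pair n' m) :=
    fun n' hn' m hm => h _ <| (Nat.pair_lt_max_add_one_sq n' m).trans_le <|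
      Nat.pow_le_pow_left (by grind) 2
  apply le_antisymm <;> apply List.findIdx_le_findIdx <;> intro n' hn' <;>
    simp +contextual [hread n' hn']

lemma primrec₂_leastSurvivor_listFn : Primrec₂ fun l n => leastSurvivor (listFn l) n := by
  have hrel : PrimrecRel fun (m : ℕ) (p : (List ℕ × ℕ) × ℕ) => listFn p.1.1 (Nat.pair p.2 m) = 0 :=
    Primrec.eq.comp (primrec₂_listFn.comp (Primrec.fst.comp (Primrec.fst.comp Primrec.snd))
      (Primrec₂.natPair.comp (Primrec.snd.comp Primrec.snd) Primrec.fst)) (Primrec.const 0)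
  have hsurv := (hrel.forall_mem_list.comp
    (Primrec.list_range.comp (Primrec.succ.comp (Primrec.snd.comp Primrec.fst))) Primrec.id).decide
  exact (Primrec.list_findIdx (Primrec.list_range.comp (Primrec.succ.comp Primrec.snd))
    hsurv.to₂).of_eq fun p => by simp [leastSurvivor]

/-- Once every smaller candidate has been refuted, the least survivor is the least witness. -/
lemma eventually_leastSurvivor_eq_find {α : ℕ → ℕ} (h : ∃ n, ∀ m, α (Nat.pair n m) = 0) :
    ∀ᶠ n in Filter.atTop, leastSurvivor α n = Nat.find h := by
  have hrefuted : ∀ n' ∈ Set.Iio (Nat.find h),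
      ∀ᶠ n in Filter.atTop, ¬ ∀ m ≤ n, α (Nat.pair n' m) = 0 := fun n' hn' => by
    obtain ⟨m, hm⟩ := not_forall.1 (Nat.find_min h hn')
    filter_upwards [Filter.eventually_ge_atTop m] with n hn using fun hall => hm (hall m hn)
  filter_upwards [Filter.eventually_ge_atTop (Nat.find h),
    (Filter.eventually_all_finite (Set.finite_Iio _)).2 hrefuted] with n hn hsmaller
  rw [leastSurvivor, List.findIdx_eq (by simpa [Nat.lt_succ_iff] using hn)]
  simp only [List.getElem_range, decide_eq_true_eq]
  exact ⟨fun m _ => Nat.find_spec h m, fun j hj => by simpa using hsmaller j hj⟩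

def sndCode : Baire := gatedCode (fun _ n => n + 1) fun l n => (listFn l n).unpair.2

lemma computable_sndCode : Computable sndCode :=
  computable_gatedCode (Primrec.succ.comp Primrec.snd).to₂
    (Primrec.snd.comp (Primrec.unpair.comp primrec₂_listFn)).to₂

lemma evalB_sndCode (x y : Baire) : evalB sndCode (pairB x y) y := by
  have h := evalB_gatedCode_of_use (F := fun β n => (β n).unpair.2) (· + 1)
    (fun _ _ n h => by rw [h n n.lt_succ_self]) (pairB x y)
  simp only [pairB, Nat.unpair_pair] at h
  exact h

lemma dne2_wRed_limN : WRed DNE2 LimN := by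
  refine ⟨gatedCode (fun _ n => (n + 1) ^ 2) fun l n => leastSurvivor (listFn l) n, sndCode,
    computable_gatedCode ?_ primrec₂_leastSurvivor_listFn, computable_sndCode, fun α hα => ?_⟩
  · have hsucc : Primrec fun p : List ℕ × ℕ => p.2 + 1 := Primrec.succ.comp Primrec.snd
    exact (Primrec.nat_mul.comp hsucc hsucc).to₂.of_eq fun _ _ => (sq _).symm
  have hwit : ∃ n, ∀ m, α (Nat.pair n m) = 0 := not_not.1 hα
  have hlim := eventually_leastSurvivor_eq_find hwit
  refine ⟨leastSurvivor α, evalB_gatedCode_of_use _ (fun _ _ _ => leastSurvivor_congr) α,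
    ⟨_, Filter.eventually_atTop.1 hlim⟩, fun y ⟨v, hy, hyv⟩ => ⟨y, evalB_sndCode α y, v, hy, ?_⟩⟩
  obtain ⟨n, hnv, hnfind⟩ := ((Filter.eventually_atTop.2 hyv).and hlim).exists
  exact hnv ▸ hnfind ▸ Nat.find_spec hwit

def constancyTest (x : ℕ → ℕ) (q : ℕ) : ℕ :=
  if ∀ s ≤ q.unpair.2, x (q.unpair.1 + s) = x q.unpair.1 then 0 else 1

lemma constancyTest_pair_eq_zero_iff {x : ℕ → ℕ} {n m : ℕ} :
    constancyTest x (Nat.pair n m) = 0 ↔ ∀ s ≤ m, x (n + s) = x n := by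
  simp [constancyTest]

lemma constancyTest_congr {x x' : ℕ → ℕ} {q : ℕ}
    (h : ∀ i < q.unpair.1 + q.unpair.2 + 1, x i = x' i) :
    constancyTest x q = constancyTest x' q := by
  have hread : ∀ s ≤ q.unpair.2, x (q.unpair.1 + s) = x' (q.unpair.1 + s) :=
    fun s hs => h _ (by omega)
  have hbase : x q.unpair.1 = x' q.unpair.1 := h _ (by omega)
  simp +contextual [constancyTest, hread, hbase]

lemma primrec₂_constancyTest_listFn : Primrec₂ fun l q => constancyTest (listFn l) q := by
  have hbase : Primrec fun p : List ℕ × ℕ => p.2.unpair.1 :=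
    Primrec.fst.comp (Primrec.unpair.comp Primrec.snd)
  have hrel : PrimrecRel fun (s : ℕ) (p : List ℕ × ℕ) =>
      listFn p.1 (p.2.unpair.1 + s) = listFn p.1 p.2.unpair.1 :=
    Primrec.eq.comp (primrec₂_listFn.comp (Primrec.fst.comp Primrec.snd)
        (Primrec.nat_add.comp (hbase.comp Primrec.snd) Primrec.fst))
      (primrec₂_listFn.comp (Primrec.fst.comp Primrec.snd) (hbase.comp Primrec.snd))
  have hconst := hrel.forall_mem_list.comp (Primrec.list_range.comp
    (Primrec.succ.comp (Primrec.snd.comp (Primrec.unpair.comp Primrec.snd)))) Primrec.id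
  exact (Primrec.ite hconst (Primrec.const 0) (Primrec.const 1)).to₂.of_eq fun l q => by
    simp [constancyTest]

def evalAtCode : Baire :=
  gatedCode (fun l _ => (listFn l 0).unpair.2 + 1) fun l _ =>
    (listFn l (listFn l 0).unpair.2).unpair.1

lemma computable_evalAtCode : Computable evalAtCode := by
  have hidx : Primrec fun l => (listFn l 0).unpair.2 :=
    Primrec.snd.comp (Primrec.unpair.comp (primrec₂_listFn.comp Primrec.id (Primrec.const 0)))
  exact computable_gatedCode (Primrec.succ.comp (hidx.comp Primrec.fst)).to₂
    (Primrec.fst.comp (Primrec.unpair.comp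
      (primrec₂_listFn.comp Primrec.fst (hidx.comp Primrec.fst)))).to₂

lemma evalB_evalAtCode (x y : Baire) : evalB evalAtCode (pairB x y) fun _ => x (y 0) := by
  have hfirst : ∀ k, 0 < k → (listFn (prefixList (pairB x y) k) 0).unpair.2 = y 0 := fun k hk => by
    rw [listFn_prefixList _ hk, pairB, Nat.unpair_pair]
  refine evalB_gatedCode (fun _ => y 0 + 1) (fun _ k => ?_) fun _ => ?_
  · rcases k with _ | k
    · simp
    · rw [hfirst _ k.succ_pos]
  · rw [hfirst _ (y 0).succ_pos, listFn_prefixList _ (y 0).lt_succ_self, pairB, Nat.unpair_pair]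

lemma limN_wRed_dne2 : WRed LimN DNE2 := by
  refine ⟨gatedCode (fun _ q => q.unpair.1 + q.unpair.2 + 1) fun l q => constancyTest (listFn l) q,
    evalAtCode, computable_gatedCode ?_ primrec₂_constancyTest_listFn, computable_evalAtCode,
    fun x ⟨_, N, hN⟩ => ⟨constancyTest x,
      evalB_gatedCode_of_use _ (fun _ _ _ => constancyTest_congr) x, fun hno => hno ⟨N, ?_⟩,
      fun y ⟨n, hy, hn⟩ => ⟨_, evalB_evalAtCode x y, x n, fun _ => by rw [hy], n, ?_⟩⟩⟩
  · exact (Primrec.succ.comp (Primrec.nat_add.comp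
      (Primrec.fst.comp (Primrec.unpair.comp Primrec.snd))
      (Primrec.snd.comp (Primrec.unpair.comp Primrec.snd)))).to₂
  · exact fun m => constancyTest_pair_eq_zero_iff.2 fun s _ =>
      (hN _ (Nat.le_add_right N s)).trans (hN N le_rfl).symm
  · intro j hj
    obtain ⟨s, rfl⟩ := Nat.exists_eq_add_of_le hj
    exact constancyTest_pair_eq_zero_iff.1 (hn s) s le_rfl

/-- `Σ⁰₂-DNE_ℝ ≡_W Lim_ℕ`. -/
theorem dne2_equiv_limN : WEquiv DNE2 LimN :=
  ⟨dne2_wRed_limN, limN_wRed_dne2⟩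

end
end

section
/- For an idempotent jump operator j on a relative pca, the (P_j, j)-realizable partial multifunctions coincide exactly with the (P, j)-realizable partial multifunctions. -/
open scoped Classical

noncomputable section

/-! If `j a = {a'}` with `a ∈ P`, then `x ↦ jj · (u · (λy. y x) · a)` is computed by an element
of `P`: the jump of `u · (λy. y x) · a` is the singleton `{a' x}`, and `jj` removes the extra
layer of `j`. Conversely every `a ∈ P` lies in `P_j`, as `j (ι a) = {a}`. -/

theorem mcompSet_of_eq_singleton {α : Type*} {j₁ j₂ : α → Set α} {x y : α}
    (hx : j₂ x = {y}) (hy : (j₁ y).Nonempty) : mcompSet j₁ j₂ x = j₁ y := by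
  ext z
  simp [mcompSet, hx, hy]

namespace IsRelPCA

variable {α : Type*} {m : α → α → Option α} {P : Set α}

theorem mem_of_apply_eq (hpca : IsRelPCA m P) {a b c : α} (ha : a ∈ P) (hb : b ∈ P)
    (h : m a b = some c) : c ∈ P := by
  obtain ⟨-, -, -, -, hcl, -⟩ := hpca
  exact hcl a ha b hb c h

theorem exists_k (hpca : IsRelPCA m P) :
    ∃ k ∈ P, ∀ a, ∃ ka, m k a = some ka ∧ ∀ x, m ka x = some a := by
  obtain ⟨k, hkP, -, -, -, hk, -⟩ := hpca
  refine ⟨k, hkP, fun a => ?_⟩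
  obtain ⟨ka, hka, -⟩ := Option.bind_eq_some_iff.mp (hk a a)
  refine ⟨ka, hka, fun x => ?_⟩
  simpa [app2, hka] using hk a x

theorem exists_s (hpca : IsRelPCA m P) :
    ∃ s ∈ P, ∀ a b, ∃ sa sab, m s a = some sa ∧ m sa b = some sab ∧
      ∀ x, m sab x = (m a x).bind fun ax => (m b x).bind (m ax) := by
  obtain ⟨-, -, s, hsP, -, -, hstot, hs⟩ := hpca
  refine ⟨s, hsP, fun a b => ?_⟩
  obtain ⟨sab, hsab⟩ := hstot a b
  obtain ⟨sa, hsa, hsab'⟩ := Option.bind_eq_some_iff.mp hsab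
  refine ⟨sa, sab, hsa, hsab', fun x => ?_⟩
  simpa [hsab] using hs a b x

theorem exists_const_mem (hpca : IsRelPCA m P) {a : α} (ha : a ∈ P) :
    ∃ c ∈ P, ∀ x, m c x = some a := by
  obtain ⟨k, hkP, hk⟩ := hpca.exists_k
  obtain ⟨ka, hka, hka'⟩ := hk a
  exact ⟨ka, hpca.mem_of_apply_eq hkP ha hka, hka'⟩

theorem exists_s_mem (hpca : IsRelPCA m P) {a b : α} (ha : a ∈ P) (hb : b ∈ P) :
    ∃ c ∈ P, ∀ x, m c x = (m a x).bind fun ax => (m b x).bind (m ax) := by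
  obtain ⟨s, hsP, hs⟩ := hpca.exists_s
  obtain ⟨sa, sab, hsa, hsab, hsab'⟩ := hs a b
  exact ⟨sab, hpca.mem_of_apply_eq (hpca.mem_of_apply_eq hsP ha hsa) hb hsab, hsab'⟩

theorem exists_comp_mem (hpca : IsRelPCA m P) {f g : α} (hf : f ∈ P) (hg : g ∈ P) :
    ∃ c ∈ P, ∀ x, m c x = (m g x).bind (m f) := by
  obtain ⟨kf, hkfP, hkf⟩ := hpca.exists_const_mem hf
  obtain ⟨c, hcP, hc⟩ := hpca.exists_s_mem hkfP hg
  exact ⟨c, hcP, fun x => by simp [hc, hkf]⟩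

theorem exists_apply_mem (hpca : IsRelPCA m P) {g a : α} (hg : g ∈ P) (ha : a ∈ P) :
    ∃ c ∈ P, ∀ x, m c x = (m g x).bind fun gx => m gx a := by
  obtain ⟨ka, hkaP, hka⟩ := hpca.exists_const_mem ha
  obtain ⟨c, hcP, hc⟩ := hpca.exists_s_mem hg hkaP
  exact ⟨c, hcP, fun x => by simp [hc, hka]⟩

theorem exists_id_mem (hpca : IsRelPCA m P) : ∃ i ∈ P, ∀ x, m i x = some x := by
  obtain ⟨k, hkP, hk⟩ := hpca.exists_k
  obtain ⟨i, hiP, hi⟩ := hpca.exists_s_mem hkP hkP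
  refine ⟨i, hiP, fun x => ?_⟩
  obtain ⟨kx, hkx, hkx'⟩ := hk x
  simp [hi, hkx, hkx']

/-- The combinator `λx. λy. y x`, realized as `x ↦ s i (k x)`. -/
theorem exists_eval_mem (hpca : IsRelPCA m P) :
    ∃ e ∈ P, ∀ x, ∃ d, m e x = some d ∧ ∀ y, m d y = m y x := by
  obtain ⟨i, hiP, hi⟩ := hpca.exists_id_mem
  obtain ⟨k, hkP, hk⟩ := hpca.exists_k
  obtain ⟨s, hsP, hs⟩ := hpca.exists_s
  obtain ⟨si, -, hsi, -⟩ := hs i i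
  obtain ⟨e, heP, he⟩ := hpca.exists_comp_mem (hpca.mem_of_apply_eq hsP hiP hsi) hkP
  refine ⟨e, heP, fun x => ?_⟩
  obtain ⟨kx, hkx, hkx'⟩ := hk x
  obtain ⟨si', d, hsi', hd, hd'⟩ := hs i kx
  obtain rfl : si' = si := Option.some_injective _ (hsi'.symm.trans hsi)
  exact ⟨d, by simp [he, hkx, hd], fun y => by simp [hd', hi, hkx']⟩

theorem subset_Pjump (hpca : IsRelPCA m P) {j : α → Set α} (hj : IdempotentJump m P j) :
    P ⊆ Pjump P j := by
  obtain ⟨-, ⟨ι, hιP, hι⟩, -⟩ := hj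
  intro a ha
  obtain ⟨w, hw, hjw⟩ := hι a
  exact ⟨w, hpca.mem_of_apply_eq hιP ha hw, hjw⟩

theorem exists_mem_jump_eq_of_jump_eq_singleton (hpca : IsRelPCA m P) {j : α → Set α}
    (hj : IdempotentJump m P j) {a a' : α} (ha : a ∈ P) (hja : j a = {a'}) :
    ∃ b ∈ P, ∀ x w₀, m a' x = some w₀ → (j w₀).Nonempty →
      ∃ w, m b x = some w ∧ j w = j w₀ := by
  obtain ⟨⟨u, huP, hu⟩, -, ⟨jj, hjjP, hjj⟩⟩ := hj
  obtain ⟨e, heP, he⟩ := hpca.exists_eval_mem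
  obtain ⟨ue, hueP, hue⟩ := hpca.exists_comp_mem huP heP
  obtain ⟨uea, hueaP, huea⟩ := hpca.exists_apply_mem hueP ha
  obtain ⟨b, hbP, hb⟩ := hpca.exists_comp_mem hjjP hueaP
  refine ⟨b, hbP, fun x w₀ hw₀ hne => ?_⟩
  obtain ⟨d, hd, hdy⟩ := he x
  obtain ⟨w₁, hw₁, hjw₁⟩ := hu d a
  obtain ⟨w, hw, hjw⟩ := hjj w₁
  have hw₁' : j w₁ = {w₀} := by
    rw [hjw₁, hja]
    ext z
    simp [hdy, hw₀, eq_comm]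
  refine ⟨w, ?_, by rw [hjw, mcompSet_of_eq_singleton hw₁' hne]⟩
  rw [hb, huea, hue, hd, Option.bind_some]
  change (app2 m u d a).bind (m jj) = _
  rw [hw₁, Option.bind_some, hw]

end IsRelPCA

/-- The `(P_j, j)`-realizable partial multifunctions coincide
with the `(P, j)`-realizable ones. -/
theorem pj_realizable_iff {α : Type*} (m : α → α → Option α) (P : Set α)
    (j : α → Set α) (hpca : IsRelPCA m P) (hj : IdempotentJump m P j)
    (f : MultiFn α) :
    JRealizable m (Pjump P j) j f ↔ JRealizable m P j f := by
  constructor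
  · rintro ⟨a', ⟨a, ha, hja⟩, hreal⟩
    obtain ⟨b, hbP, hb⟩ := hpca.exists_mem_jump_eq_of_jump_eq_singleton hj ha hja
    refine ⟨b, hbP, fun x hx => ?_⟩
    obtain ⟨w₀, hw₀, hne, hsub⟩ := hreal x hx
    obtain ⟨w, hw, hjw⟩ := hb x w₀ hw₀ hne
    exact ⟨w, hw, hjw ▸ hne, hjw ▸ hsub⟩
  · rintro ⟨a, ha, hreal⟩
    exact ⟨a, hpca.subset_Pjump hj ha, hreal⟩

end
end
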